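/- For even k ≥ 2 and n ≥ 1, the number of k-dimensional balanced ballot paths of length kn whose semisymmetric height is exactly (k²/4)·n equals the square of the (k/2)-dimensional Catalan number C_{k/2,n}, where C_{j,n} = (0!·1!···(n−1)!·(jn)!)/(j!·(j+1)!···(j+n−1)!). Moreover, a path attains this height if and only if its first (k/2)·n steps are all semisymmetric up-steps and its last (k/2)·n steps are all semisymmetric down-steps. -/
import Mathlib

open scoped Classical

/-- Number of steps among the first `i` steps of `P` equal to basis vector `j`. -/
def cnt (k n : ℕ) (P : Fin (k*n) → Fin k) (j : Fin k) (i : ℕ) : ℕ :=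
  (Finset.univ.filter (fun t : Fin (k*n) => (t : ℕ) < i ∧ P t = j)).card

/-- `P` is a `k`-dimensional balanced ballot path of length `k*n`:
each basis vector appears exactly `n` times, and every partial sum is
weakly decreasing in coordinates. -/
def IsBBP (k n : ℕ) (P : Fin (k*n) → Fin k) : Prop :=
  (∀ j : Fin k, cnt k n P j (k*n) = n) ∧
  (∀ i ≤ k*n, ∀ j j' : Fin k, j ≤ j' → cnt k n P j' i ≤ cnt k n P j i)

/-- Semisymmetric height `g_k` of the `i`-th intermediate point of `P`. -/
def ptHt (k n : ℕ) (P : Fin (k*n) → Fin k) (i : ℕ) : ℤ :=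
  ∑ j : Fin k, ((k : ℤ) - 1 - 2*(j : ℕ)) * (cnt k n P j i)

/-- The semisymmetric height of path `P` is at most `u`. -/
def HeightLE (k n : ℕ) (P : Fin (k*n) → Fin k) (u : ℤ) : Prop :=
  ∀ i ≤ k*n, ptHt k n P i ≤ u

/-- The semisymmetric height of path `P` is exactly `u`. -/
def HeightEq (k n : ℕ) (P : Fin (k*n) → Fin k) (u : ℤ) : Prop :=
  HeightLE k n P u ∧ ∃ i ≤ k*n, ptHt k n P i = u

/-- The number of `j`-dimensional balanced ballot paths of length `j*n`. -/
noncomputable def Cdim (j n : ℕ) : ℕ :=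
  Nat.card {P : Fin (j*n) → Fin j // IsBBP j n P}

lemma cnt_congrj (k n : ℕ) (P : Fin (k*n) → Fin k) {j j' : Fin k} (h : j = j') (i : ℕ) :
    cnt k n P j i = cnt k n P j' i := by rw [h]

lemma cnt_congr (k n : ℕ) (P : Fin (k*n) → Fin k) (j : Fin k) {i i' : ℕ} (h : i = i') :
    cnt k n P j i = cnt k n P j i' := by rw [h]

lemma cnt_zero (k n : ℕ) (P : Fin (k*n) → Fin k) (j : Fin k) : cnt k n P j 0 = 0 := by
  simp [cnt]

lemma cnt_succ (k n : ℕ) (P : Fin (k*n) → Fin k) (j : Fin k) (i : ℕ) (h : i < k*n) :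
    cnt k n P j (i+1) = cnt k n P j i + if P ⟨i, h⟩ = j then 1 else 0 := by
  classical
  unfold cnt
  have hsplit : (Finset.univ.filter (fun t : Fin (k*n) => (t : ℕ) < i+1 ∧ P t = j))
      = (Finset.univ.filter (fun t : Fin (k*n) => (t : ℕ) < i ∧ P t = j)) ∪
        (Finset.univ.filter (fun t : Fin (k*n) => (t : ℕ) = i ∧ P t = j)) := by
    ext t
    simp only [Finset.mem_filter, Finset.mem_union, Finset.mem_univ, true_and]
    constructor
    · rintro ⟨ht, hp⟩
      rcases Nat.lt_succ_iff_lt_or_eq.mp ht with h1 | h1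
      · exact Or.inl ⟨h1, hp⟩
      · exact Or.inr ⟨h1, hp⟩
    · rintro (⟨ht, hp⟩ | ⟨ht, hp⟩)
      · exact ⟨Nat.lt_succ_of_lt ht, hp⟩
      · exact ⟨by omega, hp⟩
  rw [hsplit, Finset.card_union_of_disjoint]
  · congr 1
    by_cases hp : P ⟨i, h⟩ = j
    · rw [if_pos hp]
      have : (Finset.univ.filter (fun t : Fin (k*n) => (t : ℕ) = i ∧ P t = j)) = {⟨i, h⟩} := by
        ext t
        simp only [Finset.mem_filter, Finset.mem_univ, true_and, Finset.mem_singleton]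
        constructor
        · rintro ⟨ht, _⟩; exact Fin.ext ht
        · rintro rfl; exact ⟨rfl, hp⟩
      rw [this]; simp
    · rw [if_neg hp]
      have : (Finset.univ.filter (fun t : Fin (k*n) => (t : ℕ) = i ∧ P t = j)) = ∅ := by
        ext t
        simp only [Finset.mem_filter, Finset.mem_univ, true_and, Finset.notMem_empty,
          iff_false, not_and]
        intro ht
        have : t = ⟨i, h⟩ := Fin.ext ht
        rw [this]; exact hp
      rw [this]; simp
  · rw [Finset.disjoint_filter]
    rintro t _ ⟨ht, _⟩ ⟨ht2, _⟩
    omega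

lemma cnt_mono (k n : ℕ) (P : Fin (k*n) → Fin k) (j : Fin k) {i i' : ℕ} (h : i ≤ i') :
    cnt k n P j i ≤ cnt k n P j i' := by
  apply Finset.card_le_card
  intro t
  simp only [Finset.mem_filter, Finset.mem_univ, true_and]
  rintro ⟨ht, hp⟩; exact ⟨lt_of_lt_of_le ht h, hp⟩

lemma cnt_le_n {k n : ℕ} {P : Fin (k*n) → Fin k} (hP : IsBBP k n P) (j : Fin k) (i : ℕ) :
    cnt k n P j i ≤ n := by
  calc cnt k n P j i ≤ cnt k n P j (k*n) := by
        apply Finset.card_le_card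
        intro t
        simp only [Finset.mem_filter, Finset.mem_univ, true_and]
        rintro ⟨_, hp⟩; exact ⟨t.2, hp⟩
    _ = n := hP.1 j

lemma sum_cnt (k n : ℕ) (P : Fin (k*n) → Fin k) {i : ℕ} (hi : i ≤ k*n) :
    ∑ j : Fin k, cnt k n P j i = i := by
  induction i with
  | zero => simp [cnt_zero]
  | succ i ih =>
    have hik : i < k*n := hi
    rw [Finset.sum_congr rfl (fun j _ => cnt_succ k n P j i hik), Finset.sum_add_distrib,
      ih (le_of_lt hik), Finset.sum_ite_eq Finset.univ (P ⟨i, hik⟩) (fun _ => 1)]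
    simp

lemma split_sum {M : Type*} [AddCommMonoid M] (m : ℕ) (f : Fin (m+m) → M) :
    ∑ j : Fin (m+m), f j
      = (∑ j ∈ Finset.range m, if h : j < m+m then f ⟨j,h⟩ else 0)
        + ∑ j ∈ Finset.range m, if h : m+j < m+m then f ⟨m+j,h⟩ else 0 := by
  have h1 : ∑ j : Fin (m+m), f j
      = ∑ j : Fin (m+m), (fun t : ℕ => if h : t < m+m then f ⟨t,h⟩ else 0) (j : ℕ) := by
    apply Finset.sum_congr rfl
    intro j _
    simp [j.2]
  calc ∑ j : Fin (m+m), f j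
      = ∑ j ∈ Finset.range (m+m), (fun t : ℕ => if h : t < m+m then f ⟨t,h⟩ else 0) j := by
        rw [← Fin.sum_univ_eq_sum_range]; exact h1
    _ = _ := by rw [Finset.sum_range_add]

lemma sum_odd (m : ℕ) : ∑ j ∈ Finset.range m, (2*(j:ℤ)+1) = (m:ℤ)*m := by
  induction m with
  | zero => simp
  | succ m ih => rw [Finset.sum_range_succ, ih]; push_cast; ring

lemma sum_coef (m : ℕ) : ∑ j ∈ Finset.range m, ((m:ℤ) + m - 1 - 2*(j:ℕ)) = (m:ℤ)*m := by
  rw [← Finset.sum_range_reflect, ← sum_odd m]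
  apply Finset.sum_congr rfl
  intro j hj
  have hjm : j < m := Finset.mem_range.mp hj
  have : ((m - 1 - j : ℕ) : ℤ) = (m:ℤ) - 1 - j := by omega
  rw [this]; ring

lemma ptHt_decomp (m n : ℕ) (P : Fin ((m+m)*n) → Fin (m+m)) (i : ℕ) :
    ptHt (m+m) n P i
      = (∑ j ∈ Finset.range m, if h : j < m+m then
          ((m:ℤ) + m - 1 - 2*j) * cnt (m+m) n P ⟨j,h⟩ i else 0)
        + ∑ j ∈ Finset.range m, if h : m+j < m+m then
          ((m:ℤ) + m - 1 - 2*(m+j)) * cnt (m+m) n P ⟨m+j,h⟩ i else 0 := by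
  unfold ptHt
  rw [split_sum m (fun j : Fin (m+m) => (((m+m : ℕ) : ℤ) - 1 - 2*(j:ℕ)) * cnt (m+m) n P j i)]
  have hc : ((m+m : ℕ) : ℤ) = (m:ℤ) + m := by push_cast; ring
  rw [hc]
  simp only [Fin.val_mk, Nat.cast_add]

lemma height_bound {m n : ℕ} {P : Fin ((m+m)*n) → Fin (m+m)} (hP : IsBBP (m+m) n P)
    (i : ℕ) (hi : i ≤ (m+m)*n) :
    ptHt (m+m) n P i ≤ ((m*m*n : ℕ) : ℤ) ∧
    (ptHt (m+m) n P i = ((m*m*n : ℕ) : ℤ) →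
      ∀ j : Fin (m+m), ((j:ℕ) < m → cnt (m+m) n P j i = n) ∧
        (m ≤ (j:ℕ) → cnt (m+m) n P j i = 0)) := by
  have hdec := ptHt_decomp m n P i
  set S₁ := ∑ j ∈ Finset.range m, if h : j < m+m then
      ((m:ℤ) + m - 1 - 2*j) * cnt (m+m) n P ⟨j,h⟩ i else 0 with hS₁
  set S₂ := ∑ j ∈ Finset.range m, if h : m+j < m+m then
      ((m:ℤ) + m - 1 - 2*(m+j)) * cnt (m+m) n P ⟨m+j,h⟩ i else 0 with hS₂
  have hterm1 : ∀ j ∈ Finset.range m,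
      (if h : j < m+m then ((m:ℤ) + m - 1 - 2*j) * cnt (m+m) n P ⟨j,h⟩ i else 0)
        ≤ ((m:ℤ) + m - 1 - 2*j) * n := by
    intro j hj
    have hjm : j < m := Finset.mem_range.mp hj
    rw [dif_pos (by omega : j < m+m)]
    have hc : (cnt (m+m) n P ⟨j, by omega⟩ i : ℤ) ≤ n := by
      exact_mod_cast cnt_le_n hP _ i
    have hcoef : (0:ℤ) < (m:ℤ) + m - 1 - 2*j := by
      have : (j:ℤ) < m := by exact_mod_cast hjm
      linarith
    exact mul_le_mul_of_nonneg_left hc (le_of_lt hcoef)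
  have hterm2 : ∀ j ∈ Finset.range m,
      (if h : m+j < m+m then ((m:ℤ) + m - 1 - 2*(m+j)) * cnt (m+m) n P ⟨m+j,h⟩ i else 0)
        ≤ 0 := by
    intro j hj
    have hjm : j < m := Finset.mem_range.mp hj
    rw [dif_pos (by omega : m+j < m+m)]
    have hcoef : ((m:ℤ) + m - 1 - 2*(m+j)) < 0 := by
      have : (j:ℕ) < m := hjm
      push_cast
      omega
    have hc : (0:ℤ) ≤ (cnt (m+m) n P ⟨m+j, by omega⟩ i : ℤ) := by positivity
    exact mul_nonpos_of_nonpos_of_nonneg (le_of_lt hcoef) hc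
  have hb1 : S₁ ≤ ∑ j ∈ Finset.range m, ((m:ℤ) + m - 1 - 2*j) * n :=
    Finset.sum_le_sum hterm1
  have hb1' : ∑ j ∈ Finset.range m, ((m:ℤ) + m - 1 - 2*(j:ℕ)) * (n:ℤ) = ((m*m*n : ℕ) : ℤ) := by
    rw [← Finset.sum_mul, sum_coef]
    push_cast; ring
  have hb2 : S₂ ≤ 0 := Finset.sum_nonpos hterm2
  constructor
  · rw [hdec]; rw [hb1'] at hb1; linarith
  · intro heq
    have hS1eq : S₁ = ∑ j ∈ Finset.range m, ((m:ℤ) + m - 1 - 2*(j:ℕ)) * (n:ℤ) := by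
      rw [hb1']; rw [hdec] at heq; rw [hb1'] at hb1; linarith
    have hS2eq : S₂ = 0 := by
      rw [hdec] at heq; rw [hb1'] at hb1; linarith
    have h1 := (Finset.sum_eq_sum_iff_of_le hterm1).mp hS1eq
    have h2 := (Finset.sum_eq_zero_iff_of_nonpos hterm2).mp hS2eq
    intro j
    constructor
    · intro hjm
      have hmem : (j:ℕ) ∈ Finset.range m := Finset.mem_range.mpr hjm
      have := h1 (j:ℕ) hmem
      rw [dif_pos (by omega : (j:ℕ) < m+m)] at this
      have hcoef : ((m:ℤ) + m - 1 - 2*(j:ℕ)) ≠ 0 := by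
        have : (j:ℕ) < m := hjm
        push_cast
        omega
      have hcnt : ((cnt (m+m) n P ⟨(j:ℕ), by omega⟩ i : ℕ) : ℤ) = n :=
        mul_left_cancel₀ hcoef this
      have hje : (⟨(j:ℕ), by omega⟩ : Fin (m+m)) = j := Fin.ext rfl
      rw [hje] at hcnt
      exact_mod_cast hcnt
    · intro hjm
      have hjlt : (j:ℕ) - m < m := by have := j.2; omega
      have hmem : (j:ℕ) - m ∈ Finset.range m := Finset.mem_range.mpr hjlt
      have := h2 ((j:ℕ) - m) hmem
      rw [dif_pos (by omega : m + ((j:ℕ)-m) < m+m)] at this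
      have hj2 := j.2
      have hcnt : ((cnt (m+m) n P ⟨m+((j:ℕ)-m), by omega⟩ i : ℕ) : ℤ) = 0 := by
        rcases mul_eq_zero.mp this with h | h
        · exfalso; omega
        · exact h
      have hje : (⟨m+((j:ℕ)-m), by omega⟩ : Fin (m+m)) = j := Fin.ext (by simp; omega)
      rw [hje] at hcnt
      exact_mod_cast hcnt

/-- If the counts are extremal at step `i`, the height equals `m*m*n`. -/
lemma height_attain {m n : ℕ} {P : Fin ((m+m)*n) → Fin (m+m)} (i : ℕ)
    (h : ∀ j : Fin (m+m), ((j:ℕ) < m → cnt (m+m) n P j i = n) ∧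
      (m ≤ (j:ℕ) → cnt (m+m) n P j i = 0)) :
    ptHt (m+m) n P i = ((m*m*n : ℕ) : ℤ) := by
  rw [ptHt_decomp]
  have h1 : ∑ j ∈ Finset.range m, (if h : j < m+m then
      ((m:ℤ) + m - 1 - 2*j) * cnt (m+m) n P ⟨j,h⟩ i else 0)
      = ∑ j ∈ Finset.range m, ((m:ℤ) + m - 1 - 2*(j:ℕ)) * (n:ℤ) := by
    apply Finset.sum_congr rfl
    intro j hj
    have hjm : j < m := Finset.mem_range.mp hj
    rw [dif_pos (by omega : j < m+m), (h ⟨j, by omega⟩).1 hjm]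
  have h2 : ∑ j ∈ Finset.range m, (if h : m+j < m+m then
      ((m:ℤ) + m - 1 - 2*(m+j)) * cnt (m+m) n P ⟨m+j,h⟩ i else 0) = 0 := by
    apply Finset.sum_eq_zero
    intro j hj
    have hjm : j < m := Finset.mem_range.mp hj
    rw [dif_pos (by omega : m+j < m+m), (h ⟨m+j, by omega⟩).2 (by simp)]
    simp
  rw [h1, h2, ← Finset.sum_mul, sum_coef]
  push_cast; ring

/-- If the counts are extremal at step `i ≤ (m+m)*n`, then `i = m*n`. -/
lemma extremal_index {m n : ℕ} {P : Fin ((m+m)*n) → Fin (m+m)} {i : ℕ} (hi : i ≤ (m+m)*n)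
    (h : ∀ j : Fin (m+m), ((j:ℕ) < m → cnt (m+m) n P j i = n) ∧
      (m ≤ (j:ℕ) → cnt (m+m) n P j i = 0)) :
    i = m*n := by
  have hs := sum_cnt (m+m) n P hi
  rw [split_sum m (fun j : Fin (m+m) => cnt (m+m) n P j i)] at hs
  have h1 : ∑ j ∈ Finset.range m, (if hh : j < m+m then cnt (m+m) n P ⟨j,hh⟩ i else 0)
      = ∑ j ∈ Finset.range m, n := by
    apply Finset.sum_congr rfl
    intro j hj
    have hjm : j < m := Finset.mem_range.mp hj
    rw [dif_pos (by omega : j < m+m)]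
    exact (h ⟨j, by omega⟩).1 hjm
  have h2 : ∑ j ∈ Finset.range m, (if hh : m+j < m+m then cnt (m+m) n P ⟨m+j,hh⟩ i else 0)
      = 0 := by
    apply Finset.sum_eq_zero
    intro j hj
    have hjm : j < m := Finset.mem_range.mp hj
    rw [dif_pos (by omega : m+j < m+m)]
    exact (h ⟨m+j, by omega⟩).2 (by simp)
  rw [h1, h2, Finset.sum_const, Finset.card_range, smul_eq_mul] at hs
  omega

/-- The step condition. -/
def StepCond (m n : ℕ) (P : Fin ((m+m)*n) → Fin (m+m)) : Prop :=
  ∀ t : Fin ((m+m)*n), ((t : ℕ) < m*n → (P t : ℕ) < m) ∧ (m*n ≤ (t : ℕ) → m ≤ (P t : ℕ))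

/-- Extremal counts at `i` imply the step condition. -/
lemma extremal_to_step {m n : ℕ} {P : Fin ((m+m)*n) → Fin (m+m)} (hP : IsBBP (m+m) n P)
    {i : ℕ} (hi : i ≤ (m+m)*n)
    (h : ∀ j : Fin (m+m), ((j:ℕ) < m → cnt (m+m) n P j i = n) ∧
      (m ≤ (j:ℕ) → cnt (m+m) n P j i = 0)) :
    StepCond m n P := by
  have hieq : i = m*n := extremal_index hi h
  subst hieq
  intro t
  constructor
  · intro ht
    by_contra hc
    push_neg at hc
    have h0 : cnt (m+m) n P (P t) (m*n) = 0 := (h (P t)).2 hc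
    have : t ∈ Finset.univ.filter (fun s : Fin ((m+m)*n) => (s:ℕ) < m*n ∧ P s = P t) := by
      simp [ht]
    rw [cnt] at h0  -- cnt is card, card = 0 means empty
    have := Finset.card_pos.mpr ⟨t, this⟩
    omega
  · intro ht
    by_contra hc
    push_neg at hc
    have hn1 : cnt (m+m) n P (P t) (m*n) = n := (h (P t)).1 hc
    have hn2 : cnt (m+m) n P (P t) ((m+m)*n) = n := hP.1 (P t)
    have hss : Finset.univ.filter (fun s : Fin ((m+m)*n) => (s:ℕ) < m*n ∧ P s = P t)
        ⊂ Finset.univ.filter (fun s : Fin ((m+m)*n) => (s:ℕ) < (m+m)*n ∧ P s = P t) := by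
      rw [Finset.ssubset_iff_of_subset]
      · exact ⟨t, by simp [t.2], by simp; omega⟩
      · intro s hs
        simp only [Finset.mem_filter, Finset.mem_univ, true_and] at hs ⊢
        exact ⟨s.2, hs.2⟩
    have := Finset.card_lt_card hss
    rw [cnt] at hn1 hn2
    omega

/-- The step condition implies extremal counts at `m*n`. -/
lemma step_to_extremal {m n : ℕ} {P : Fin ((m+m)*n) → Fin (m+m)} (hP : IsBBP (m+m) n P)
    (hs : StepCond m n P) :
    ∀ j : Fin (m+m), ((j:ℕ) < m → cnt (m+m) n P j (m*n) = n) ∧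
      (m ≤ (j:ℕ) → cnt (m+m) n P j (m*n) = 0) := by
  have hzero : ∀ j : Fin (m+m), m ≤ (j:ℕ) → cnt (m+m) n P j (m*n) = 0 := by
    intro j hj
    rw [cnt, Finset.card_eq_zero, Finset.filter_eq_empty_iff]
    rintro t _
    rintro ⟨ht, hp⟩
    have := (hs t).1 ht
    rw [hp] at this
    omega
  have hsum := sum_cnt (m+m) n P (show m*n ≤ (m+m)*n by nlinarith)
  rw [split_sum m (fun j : Fin (m+m) => cnt (m+m) n P j (m*n))] at hsum
  have h2 : ∑ j ∈ Finset.range m, (if hh : m+j < m+m then cnt (m+m) n P ⟨m+j,hh⟩ (m*n) else 0)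
      = 0 := by
    apply Finset.sum_eq_zero
    intro j hj
    rw [dif_pos (by have := Finset.mem_range.mp hj; omega : m+j < m+m)]
    exact hzero _ (by simp)
  rw [h2, add_zero] at hsum
  have hle : ∀ j ∈ Finset.range m,
      (if hh : j < m+m then cnt (m+m) n P ⟨j,hh⟩ (m*n) else 0) ≤ n := by
    intro j hj
    rw [dif_pos (by have := Finset.mem_range.mp hj; omega : j < m+m)]
    exact cnt_le_n hP _ _
  have heach := (Finset.sum_eq_sum_iff_of_le hle).mp (by
    rw [hsum, Finset.sum_const, Finset.card_range, smul_eq_mul])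
  intro j
  refine ⟨fun hj => ?_, hzero j⟩
  have := heach (j:ℕ) (Finset.mem_range.mpr hj)
  rw [dif_pos (by omega : (j:ℕ) < m+m)] at this
  have hje : (⟨(j:ℕ), by omega⟩ : Fin (m+m)) = j := Fin.ext rfl
  rwa [hje] at this

lemma mul_split (m n : ℕ) : (m+m)*n = m*n + m*n := by ring

lemma heightEq_iff_step {m n : ℕ} {P : Fin ((m+m)*n) → Fin (m+m)} (hP : IsBBP (m+m) n P) :
    HeightEq (m+m) n P ((m*m*n : ℕ) : ℤ) ↔ StepCond m n P := by
  constructor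
  · rintro ⟨_, i, hi, heq⟩
    exact extremal_to_step hP hi ((height_bound hP i hi).2 heq)
  · intro hs
    refine ⟨fun i hi => (height_bound hP i hi).1, m*n, by rw [mul_split]; omega, ?_⟩
    exact height_attain (m*n) (step_to_extremal hP hs)

section Transfer

variable {m n : ℕ} {P : Fin ((m+m)*n) → Fin (m+m)} {Q₁ Q₂ : Fin (m*n) → Fin m}

/-- Relation between `P` and its two halves. -/
def PRel (m n : ℕ) (P : Fin ((m+m)*n) → Fin (m+m)) (Q₁ Q₂ : Fin (m*n) → Fin m) : Prop :=
  (∀ (t : Fin ((m+m)*n)) (ht : (t:ℕ) < m*n), (P t : ℕ) = Q₁ ⟨t, ht⟩) ∧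
  (∀ (t : Fin ((m+m)*n)) (ht : m*n ≤ (t:ℕ)),
    (P t : ℕ) = m + Q₂ ⟨(t:ℕ) - m*n, by have h1 := t.2; have h2 := mul_split m n; omega⟩)

lemma rel_step (hR : PRel m n P Q₁ Q₂) : StepCond m n P := by
  intro t
  constructor
  · intro ht
    rw [hR.1 t ht]
    exact (Q₁ _).2
  · intro ht
    rw [hR.2 t ht]
    omega

lemma relA (hR : PRel m n P Q₁ Q₂) :
    ∀ i ≤ m*n, ∀ (j : Fin (m+m)) (hj : (j:ℕ) < m),
      cnt (m+m) n P j i = cnt m n Q₁ ⟨j, hj⟩ i := by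
  intro i
  induction i with
  | zero => intro _ j hj; rw [cnt_zero, cnt_zero]
  | succ i ih =>
    intro hi j hj
    have hi1 : i < m*n := hi
    have hi2 : i < (m+m)*n := by rw [mul_split]; omega
    rw [cnt_succ _ _ _ _ _ hi2, cnt_succ _ _ _ _ _ hi1, ih (le_of_lt hi1) j hj]
    congr 1
    have hv := hR.1 ⟨i, hi2⟩ hi1
    by_cases hc : P ⟨i, hi2⟩ = j
    · rw [if_pos hc, if_pos (Fin.ext (by rw [← hv, hc]))]
    · rw [if_neg hc, if_neg (fun hcc => hc (Fin.ext (by rw [hv, Fin.ext_iff] at *; exact hcc)))]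

lemma relB (hR : PRel m n P Q₁ Q₂) :
    ∀ i ≤ m*n, ∀ (j : Fin (m+m)), m ≤ (j:ℕ) → cnt (m+m) n P j i = 0 := by
  intro i
  induction i with
  | zero => intro _ j _; rw [cnt_zero]
  | succ i ih =>
    intro hi j hj
    have hi1 : i < m*n := hi
    have hi2 : i < (m+m)*n := by rw [mul_split]; omega
    rw [cnt_succ _ _ _ _ _ hi2, ih (le_of_lt hi1) j hj]
    have hv := hR.1 ⟨i, hi2⟩ hi1
    rw [if_neg, zero_add]
    intro hc
    rw [hc] at hv
    have := (Q₁ ⟨i, hi1⟩).2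
    omega

lemma relC (hR : PRel m n P Q₁ Q₂) :
    ∀ s ≤ m*n, ∀ (j : Fin (m+m)), (j:ℕ) < m →
      cnt (m+m) n P j (m*n + s) = cnt (m+m) n P j (m*n) := by
  intro s
  induction s with
  | zero => intro _ j _; rfl
  | succ s ih =>
    intro hs j hj
    have hs1 : s < m*n := hs
    have hi2 : m*n + s < (m+m)*n := by rw [mul_split]; omega
    rw [show m*n+(s+1) = (m*n+s)+1 from rfl, cnt_succ _ _ _ _ _ hi2, ih (le_of_lt hs1) j hj]
    have hv := hR.2 ⟨m*n + s, hi2⟩ (by simp)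
    rw [if_neg, add_zero]
    intro hc
    rw [hc] at hv
    omega

lemma relD (hR : PRel m n P Q₁ Q₂) :
    ∀ s ≤ m*n, ∀ (j : Fin (m+m)) (hj : m ≤ (j:ℕ)),
      cnt (m+m) n P j (m*n + s) = cnt m n Q₂ ⟨(j:ℕ) - m, by have := j.2; omega⟩ s := by
  intro s
  induction s with
  | zero => intro _ j hj; rw [cnt_zero, Nat.add_zero, relB hR (m*n) le_rfl j hj]
  | succ s ih =>
    intro hs j hj
    have hs1 : s < m*n := hs
    have hi2 : m*n + s < (m+m)*n := by rw [mul_split]; omega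
    rw [show m*n+(s+1) = (m*n+s)+1 from rfl, cnt_succ _ _ _ _ _ hi2, cnt_succ _ _ _ _ _ hs1, ih (le_of_lt hs1) j hj]
    congr 1
    have hv := hR.2 ⟨m*n + s, hi2⟩ (by simp)
    simp only [Nat.add_sub_cancel_left] at hv
    by_cases hc : P ⟨m*n + s, hi2⟩ = j
    · rw [if_pos hc, if_pos]
      apply Fin.ext
      rw [hc] at hv
      simp only [Fin.val_mk] at hv ⊢
      omega
    · rw [if_neg hc, if_neg]
      intro hcc
      apply hc
      apply Fin.ext
      rw [hv]
      have : ((Q₂ ⟨s, hs1⟩ : ℕ)) = (j:ℕ) - m := by rw [hcc]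
      omega

end Transfer

section BBPTransfer

variable {m n : ℕ} {P : Fin ((m+m)*n) → Fin (m+m)} {Q₁ Q₂ : Fin (m*n) → Fin m}

lemma glue_BBP (hR : PRel m n P Q₁ Q₂) (hQ₁ : IsBBP m n Q₁) (hQ₂ : IsBBP m n Q₂) :
    IsBBP (m+m) n P := by
  have hms := mul_split m n
  constructor
  · intro j
    by_cases hj : (j:ℕ) < m
    · rw [hms, relC hR (m*n) le_rfl j hj, relA hR (m*n) le_rfl j hj]
      have : (⟨(j:ℕ), hj⟩ : Fin m) = ⟨(j:ℕ), hj⟩ := rfl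
      exact hQ₁.1 _
    · push_neg at hj
      rw [hms, relD hR (m*n) le_rfl j hj]
      exact hQ₂.1 _
  · intro i hi j j' hjj
    have hjj' : (j:ℕ) ≤ (j':ℕ) := hjj
    by_cases hile : i ≤ m*n
    · by_cases hj' : (j':ℕ) < m
      · have hj : (j:ℕ) < m := by omega
        rw [relA hR i hile j hj, relA hR i hile j' hj']
        exact hQ₁.2 i hile _ _ (by exact hjj')
      · push_neg at hj'
        rw [relB hR i hile j' hj']
        exact Nat.zero_le _
    · push_neg at hile
      have hs : i - m*n ≤ m*n := by omega
      have hieq : i = m*n + (i - m*n) := by omega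
      by_cases hj : (j:ℕ) < m
      · -- cnt j i = n
        have hcj : cnt (m+m) n P j i = n := by
          rw [hieq, relC hR _ hs j hj, relA hR (m*n) le_rfl j hj]
          exact hQ₁.1 _
        rw [hcj]
        by_cases hj' : (j':ℕ) < m
        · have hcj' : cnt (m+m) n P j' i = n := by
            rw [hieq, relC hR _ hs j' hj', relA hR (m*n) le_rfl j' hj']
            exact hQ₁.1 _
          omega
        · push_neg at hj'
          rw [hieq, relD hR _ hs j' hj']
          exact cnt_le_n hQ₂ _ _
      · push_neg at hj
        have hj' : m ≤ (j':ℕ) := by omega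
        rw [hieq, relD hR _ hs j hj, relD hR _ hs j' hj']
        exact hQ₂.2 _ hs _ _ (by simp only [Fin.mk_le_mk]; omega)

lemma split_BBP (hR : PRel m n P Q₁ Q₂) (hP : IsBBP (m+m) n P) :
    IsBBP m n Q₁ ∧ IsBBP m n Q₂ := by
  have hms := mul_split m n
  constructor
  · constructor
    · intro j
      have hj : ((⟨(j:ℕ), by have := j.2; omega⟩ : Fin (m+m)) : ℕ) < m := j.2
      have h1 := relA hR (m*n) le_rfl ⟨(j:ℕ), by have := j.2; omega⟩ hj
      have h2 := relC hR (m*n) le_rfl ⟨(j:ℕ), by have := j.2; omega⟩ hj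
      have h3 : cnt (m+m) n P ⟨(j:ℕ), by have := j.2; omega⟩ (m*n + m*n) = n :=
        (cnt_congr _ _ _ _ hms.symm).trans (hP.1 _)
      exact h1.symm.trans (h2.symm.trans h3)
    · intro i hi j j' hjj
      have hjj' : (j:ℕ) ≤ (j':ℕ) := hjj
      have hj : ((⟨(j:ℕ), by have := j.2; omega⟩ : Fin (m+m)) : ℕ) < m := j.2
      have hj' : ((⟨(j':ℕ), by have := j'.2; omega⟩ : Fin (m+m)) : ℕ) < m := j'.2
      have h1 := relA hR i hi ⟨(j:ℕ), by have := j.2; omega⟩ hj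
      have h2 := relA hR i hi ⟨(j':ℕ), by have := j'.2; omega⟩ hj'
      have h3 := hP.2 i (by rw [hms]; omega) ⟨(j:ℕ), by have := j.2; omega⟩
        ⟨(j':ℕ), by have := j'.2; omega⟩ (by simp only [Fin.mk_le_mk]; omega)
      exact le_trans h2.symm.le (le_trans h3 h1.le)
  · constructor
    · intro j
      have hj : m ≤ ((⟨m + (j:ℕ), by have := j.2; omega⟩ : Fin (m+m)) : ℕ) := by simp
      have h1 := relD hR (m*n) le_rfl ⟨m + (j:ℕ), by have := j.2; omega⟩ hj
      have h3 : cnt (m+m) n P ⟨m + (j:ℕ), by have := j.2; omega⟩ (m*n + m*n) = n :=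
        (cnt_congr _ _ _ _ hms.symm).trans (hP.1 _)
      have h4 : (⟨((⟨m + (j:ℕ), by have := j.2; omega⟩ : Fin (m+m)) : ℕ) - m,
          by have := j.2; simp⟩ : Fin m) = j := Fin.ext (by simp)
      exact (cnt_congrj m n Q₂ h4 (m*n)).symm.trans (h1.symm.trans h3)
    · intro s hs j j' hjj
      have hjj' : (j:ℕ) ≤ (j':ℕ) := hjj
      have hj : m ≤ ((⟨m + (j:ℕ), by have := j.2; omega⟩ : Fin (m+m)) : ℕ) := by simp
      have hj' : m ≤ ((⟨m + (j':ℕ), by have := j'.2; omega⟩ : Fin (m+m)) : ℕ) := by simp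
      have h1 := relD hR s hs ⟨m + (j:ℕ), by have := j.2; omega⟩ hj
      have h2 := relD hR s hs ⟨m + (j':ℕ), by have := j'.2; omega⟩ hj'
      have h3 := hP.2 (m*n + s) (by rw [hms]; omega) ⟨m + (j:ℕ), by have := j.2; omega⟩
        ⟨m + (j':ℕ), by have := j'.2; omega⟩ (by simp only [Fin.mk_le_mk]; omega)
      have h4 : (⟨((⟨m + (j:ℕ), by have := j.2; omega⟩ : Fin (m+m)) : ℕ) - m,
          by have := j.2; simp⟩ : Fin m) = j := Fin.ext (by simp)
      have h4' : (⟨((⟨m + (j':ℕ), by have := j'.2; omega⟩ : Fin (m+m)) : ℕ) - m,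
          by have := j'.2; simp⟩ : Fin m) = j' := Fin.ext (by simp)
      calc cnt m n Q₂ j' s = cnt (m+m) n P ⟨m + (j':ℕ), by have := j'.2; omega⟩ (m*n + s) :=
            (cnt_congrj m n Q₂ h4'.symm s).trans h2.symm
        _ ≤ cnt (m+m) n P ⟨m + (j:ℕ), by have := j.2; omega⟩ (m*n + s) := h3
        _ = cnt m n Q₂ j s := h1.trans (cnt_congrj m n Q₂ h4 s)

end BBPTransfer

def glue (m n : ℕ) (Q₁ Q₂ : Fin (m*n) → Fin m) (t : Fin ((m+m)*n)) : Fin (m+m) :=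
  if h : (t:ℕ) < m*n then ⟨Q₁ ⟨t, h⟩, by have := (Q₁ ⟨t, h⟩).2; omega⟩
  else ⟨m + Q₂ ⟨(t:ℕ) - m*n, by have h1 := t.2; have h2 := mul_split m n; omega⟩,
    by have := (Q₂ ⟨(t:ℕ) - m*n, by have h1 := t.2; have h2 := mul_split m n; omega⟩).2; omega⟩

lemma glue_rel (m n : ℕ) (Q₁ Q₂ : Fin (m*n) → Fin m) : PRel m n (glue m n Q₁ Q₂) Q₁ Q₂ := by
  constructor
  · intro t ht
    rw [glue, dif_pos ht]
  · intro t ht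
    rw [glue, dif_neg (by omega)]

section Bij

variable {m n : ℕ}

lemma splitlt1 (m n : ℕ) (t : Fin (m*n)) : (t:ℕ) < (m+m)*n := by
  have h1 := t.2; have h2 := mul_split m n; omega

lemma splitlt2 (m n : ℕ) (t : Fin (m*n)) : m*n + (t:ℕ) < (m+m)*n := by
  have h1 := t.2; have h2 := mul_split m n; omega

def splitQ1 (m n : ℕ) (P : Fin ((m+m)*n) → Fin (m+m)) (hs : StepCond m n P)
    (t : Fin (m*n)) : Fin m :=
  ⟨(P ⟨(t:ℕ), splitlt1 m n t⟩ : ℕ), (hs ⟨(t:ℕ), splitlt1 m n t⟩).1 t.2⟩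

def splitQ2 (m n : ℕ) (P : Fin ((m+m)*n) → Fin (m+m)) (hs : StepCond m n P)
    (t : Fin (m*n)) : Fin m :=
  ⟨(P ⟨m*n + (t:ℕ), splitlt2 m n t⟩ : ℕ) - m, by
    have h1 := (P ⟨m*n + (t:ℕ), splitlt2 m n t⟩).2
    have h2 := (hs ⟨m*n + (t:ℕ), splitlt2 m n t⟩).2 (Nat.le_add_right _ _)
    omega⟩

lemma split_rel (m n : ℕ) (P : Fin ((m+m)*n) → Fin (m+m)) (hs : StepCond m n P) :
    PRel m n P (splitQ1 m n P hs) (splitQ2 m n P hs) := by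
  constructor
  · intro t ht
    rfl
  · intro t ht
    have pf : (t:ℕ) - m*n < m*n := by
      have h1 := t.2; have h2 := mul_split m n; omega
    show (P t : ℕ)
      = m + ((P ⟨m*n + ((t:ℕ) - m*n), splitlt2 m n ⟨(t:ℕ) - m*n, pf⟩⟩ : ℕ) - m)
    have hidx : (⟨m*n + ((t:ℕ) - m*n), splitlt2 m n ⟨(t:ℕ) - m*n, pf⟩⟩ :
        Fin ((m+m)*n)) = t := Fin.ext (by show m*n + ((t:ℕ) - m*n) = (t:ℕ); omega)
    rw [hidx]
    have := (hs t).2 ht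
    omega

lemma rel_ext {P P' : Fin ((m+m)*n) → Fin (m+m)} {Q₁ Q₂ : Fin (m*n) → Fin m}
    (h1 : PRel m n P Q₁ Q₂) (h2 : PRel m n P' Q₁ Q₂) : P = P' := by
  funext t
  apply Fin.ext
  by_cases ht : (t:ℕ) < m*n
  · rw [h1.1 t ht, h2.1 t ht]
  · push_neg at ht
    rw [h1.2 t ht, h2.2 t ht]

lemma rel_ext_Q {P : Fin ((m+m)*n) → Fin (m+m)} {Q₁ Q₂ Q₁' Q₂' : Fin (m*n) → Fin m}
    (h1 : PRel m n P Q₁ Q₂) (h2 : PRel m n P Q₁' Q₂') : Q₁ = Q₁' ∧ Q₂ = Q₂' := by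
  constructor
  · funext t
    apply Fin.ext
    exact (h1.1 ⟨(t:ℕ), splitlt1 m n t⟩ t.2).symm.trans (h2.1 ⟨(t:ℕ), splitlt1 m n t⟩ t.2)
  · funext t
    apply Fin.ext
    have l1 := h1.2 ⟨m*n + (t:ℕ), splitlt2 m n t⟩ (Nat.le_add_right _ _)
    have l2 := h2.2 ⟨m*n + (t:ℕ), splitlt2 m n t⟩ (Nat.le_add_right _ _)
    have hidx : (⟨((⟨m*n + (t:ℕ), splitlt2 m n t⟩ : Fin ((m+m)*n)) : ℕ) - m*n,
        by have h1 := t.2; simp only [Fin.val_mk]; omega⟩ : Fin (m*n)) = t :=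
      Fin.ext (by show m*n + (t:ℕ) - m*n = (t:ℕ); omega)
    rw [← hidx]
    exact Nat.add_left_cancel (l1.symm.trans l2)

lemma count_eq (m n : ℕ) :
    Nat.card {P : Fin ((m+m)*n) → Fin (m+m) // IsBBP (m+m) n P ∧
        HeightEq (m+m) n P ((m*m*n : ℕ) : ℤ)}
      = Nat.card ({Q : Fin (m*n) → Fin m // IsBBP m n Q} ×
          {Q : Fin (m*n) → Fin m // IsBBP m n Q}) := by
  refine (Nat.card_eq_of_bijective
    (fun qq : {Q : Fin (m*n) → Fin m // IsBBP m n Q} × {Q : Fin (m*n) → Fin m // IsBBP m n Q} =>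
      (⟨glue m n qq.1.1 qq.2.1, glue_BBP (glue_rel m n qq.1.1 qq.2.1) qq.1.2 qq.2.2,
        (heightEq_iff_step (glue_BBP (glue_rel m n qq.1.1 qq.2.1) qq.1.2 qq.2.2)).mpr
          (rel_step (glue_rel m n qq.1.1 qq.2.1))⟩ :
        {P : Fin ((m+m)*n) → Fin (m+m) // IsBBP (m+m) n P ∧
          HeightEq (m+m) n P ((m*m*n : ℕ) : ℤ)}))
    ⟨?_, ?_⟩).symm
  · -- injective
    rintro ⟨⟨a1, ha1⟩, ⟨a2, ha2⟩⟩ ⟨⟨b1, hb1⟩, ⟨b2, hb2⟩⟩ h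
    have hglue : glue m n a1 a2 = glue m n b1 b2 := congrArg Subtype.val h
    have hra := glue_rel m n a1 a2
    have hrb := glue_rel m n b1 b2
    rw [hglue] at hra
    have hq := rel_ext_Q hra hrb
    simp only [Prod.mk.injEq, Subtype.mk.injEq]
    exact ⟨hq.1, hq.2⟩
  · -- surjective
    rintro ⟨P, hbbp, hht⟩
    have hstep : StepCond m n P := (heightEq_iff_step hbbp).mp hht
    have hsplit := split_rel m n P hstep
    have hQbbp := split_BBP hsplit hbbp
    exact ⟨⟨⟨splitQ1 m n P hstep, hQbbp.1⟩, ⟨splitQ2 m n P hstep, hQbbp.2⟩⟩,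
      Subtype.ext (rel_ext (glue_rel m n _ _) hsplit)⟩

end Bij


theorem stmt16 (k n : ℕ) (hk : 2 ≤ k) (hke : Even k) (hn : 1 ≤ n) :
    Nat.card {P : Fin (k*n) → Fin k // IsBBP k n P ∧
        HeightEq k n P (((k/2) * (k/2) * n : ℕ) : ℤ)} = (Cdim (k/2) n)^2 ∧
    ∀ P : Fin (k*n) → Fin k, IsBBP k n P →
      (HeightEq k n P (((k/2) * (k/2) * n : ℕ) : ℤ) ↔
        ∀ t : Fin (k*n), ((t : ℕ) < (k/2)*n → (P t : ℕ) < k/2) ∧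
          ((k/2)*n ≤ (t : ℕ) → k/2 ≤ (P t : ℕ))) := by
  obtain ⟨m, hm⟩ := hke
  subst hm
  have h2 : (m + m) / 2 = m := by omega
  rw [h2]
  constructor
  · rw [count_eq m n, Nat.card_prod, Cdim, sq]
  · intro P hP
    exact heightEq_iff_step hP
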